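/- arXiv:1702.02470 — 5 statements merged into one kernel-verified Lean document; each statement's English description precedes it below -/
import Mathlib

section
/- Let G = (V,E) be a finite simple graph and let S be a minimum-size vertex cover of G. Suppose v ∈ S and J ⊆ N(v) \ S is such that N(J) ⊆ N[v]. Then every vertex cover S' of G either contains v or satisfies |S'| ≥ |S| + |J| − 1. -/
/-- `S` is a vertex cover of `G`: every edge has at least one endpoint in `S`. -/
def IsVertexCover {V : Type*} (G : SimpleGraph V) (S : Finset V) : Prop :=
  ∀ ⦃u w : V⦄, G.Adj u w → u ∈ S ∨ w ∈ S

/-- `S` is a minimum-size vertex cover of `G`. -/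
def IsMinVertexCover {V : Type*} (G : SimpleGraph V) (S : Finset V) : Prop :=
  IsVertexCover G S ∧ ∀ T : Finset V, IsVertexCover G T → S.card ≤ T.card

theorem witness_pruning_bound {V : Type*} [Fintype V] [DecidableEq V]
    (G : SimpleGraph V) [DecidableRel G.Adj]
    (S : Finset V) (hS : IsMinVertexCover G S)
    (v : V) (hv : v ∈ S) (J : Finset V)
    (hJ : J ⊆ G.neighborFinset v \ S)
    (hNJ : ∀ u ∈ J, G.neighborFinset u ⊆ insert v (G.neighborFinset v)) :
    ∀ S' : Finset V, IsVertexCover G S' →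
      v ∈ S' ∨ S.card + J.card - 1 ≤ S'.card := by
  intro S' hS'
  by_cases hvS' : v ∈ S'
  · exact Or.inl hvS'
  right
  have hJS' : J ⊆ S' := by
    intro u hu
    have h := Finset.mem_sdiff.mp (hJ hu)
    have hadj : G.Adj v u := (SimpleGraph.mem_neighborFinset ..).mp h.1
    rcases hS' hadj with h' | h'
    · exact absurd h' hvS'
    · exact h'
  -- key: for an edge from a vertex of J to a non-v vertex, the other endpoint is in S' \ J
  have key : ∀ a b : V, G.Adj a b → a ∈ J → b ≠ v → b ∈ S' \ J := by
    intro a b hab haJ hbv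
    have hbN : b ∈ G.neighborFinset a := (SimpleGraph.mem_neighborFinset ..).mpr hab
    have hb' := hNJ a haJ hbN
    have hbNv : b ∈ G.neighborFinset v := by
      rcases Finset.mem_insert.mp hb' with h | h
      · exact absurd h hbv
      · exact h
    have hadj : G.Adj v b := (SimpleGraph.mem_neighborFinset ..).mp hbNv
    have hbS' : b ∈ S' := by
      rcases hS' hadj with h | h
      · exact absurd h hvS'
      · exact h
    have hbJ : b ∉ J := by
      intro hbJ
      have ha' := Finset.mem_sdiff.mp (hJ haJ)
      have hb2 := Finset.mem_sdiff.mp (hJ hbJ)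
      rcases hS.1 hab with h | h
      · exact ha'.2 h
      · exact hb2.2 h
    exact Finset.mem_sdiff.mpr ⟨hbS', hbJ⟩
  set T := insert v (S' \ J) with hT
  have hTcover : IsVertexCover G T := by
    intro a b hab
    by_cases hav : a = v
    · exact Or.inl (by simp [hT, hav])
    by_cases hbv : b = v
    · exact Or.inr (by simp [hT, hbv])
    by_cases haJ : a ∈ J
    · exact Or.inr (Finset.mem_insert_of_mem (key a b hab haJ hbv))
    by_cases hbJ : b ∈ J
    · exact Or.inl (Finset.mem_insert_of_mem (key b a hab.symm hbJ hav))
    rcases hS' hab with h | h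
    · exact Or.inl (Finset.mem_insert_of_mem (Finset.mem_sdiff.mpr ⟨h, haJ⟩))
    · exact Or.inr (Finset.mem_insert_of_mem (Finset.mem_sdiff.mpr ⟨h, hbJ⟩))
  have hST := hS.2 T hTcover
  have hcardT : T.card ≤ S'.card - J.card + 1 := by
    have h1 : (S' \ J).card = S'.card - J.card := Finset.card_sdiff_of_subset hJS'
    calc T.card ≤ (S' \ J).card + 1 := Finset.card_insert_le _ _
      _ = S'.card - J.card + 1 := by rw [h1]
  have hJle : J.card ≤ S'.card := Finset.card_le_card hJS'
  have hv1 : 1 ≤ S.card := Finset.card_pos.mpr ⟨v, hv⟩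
  omega
end

section
/- Let G = (V,E) be a finite simple graph and k a nonnegative integer. If G has a vertex cover of size at most k and every vertex of G has degree at most k, then G has at most 2k² non-isolated vertices (vertices of degree at least 1). -/
theorem buss_kernel_vertex_bound {V : Type*} [Fintype V] [DecidableEq V]
    (G : SimpleGraph V) [DecidableRel G.Adj] (k : ℕ)
    (hcov : ∃ S : Finset V, IsVertexCover G S ∧ S.card ≤ k)
    (hdeg : ∀ v : V, G.degree v ≤ k) :
    (Finset.univ.filter (fun v : V => 1 ≤ G.degree v)).card ≤ 2 * k ^ 2 := by
  obtain ⟨S, hS, hSk⟩ := hcov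
  have hsub : (Finset.univ.filter (fun v : V => 1 ≤ G.degree v)) ⊆
      S ∪ S.biUnion (fun s => G.neighborFinset s) := by
    intro v hv
    simp only [Finset.mem_filter] at hv
    have hpos : 0 < G.degree v := hv.2
    rw [← SimpleGraph.card_neighborFinset_eq_degree, Finset.card_pos] at hpos
    obtain ⟨w, hw⟩ := hpos
    rw [SimpleGraph.mem_neighborFinset] at hw
    rcases hS hw with h | h
    · exact Finset.mem_union_left _ h
    · refine Finset.mem_union_right _ (Finset.mem_biUnion.mpr ⟨w, h, ?_⟩)
      rw [SimpleGraph.mem_neighborFinset]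
      exact hw.symm
  calc (Finset.univ.filter (fun v : V => 1 ≤ G.degree v)).card
      ≤ (S ∪ S.biUnion (fun s => G.neighborFinset s)).card := Finset.card_le_card hsub
    _ ≤ S.card + (S.biUnion (fun s => G.neighborFinset s)).card := Finset.card_union_le _ _
    _ ≤ k + k * k := by
        have : (S.biUnion (fun s => G.neighborFinset s)).card ≤ k * k := by
          calc (S.biUnion (fun s => G.neighborFinset s)).card
              ≤ ∑ s ∈ S, (G.neighborFinset s).card := Finset.card_biUnion_le
            _ ≤ ∑ _s ∈ S, k := Finset.sum_le_sum (fun s _ => by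
                rw [SimpleGraph.card_neighborFinset_eq_degree]; exact hdeg s)
            _ = S.card * k := by simp [Finset.sum_const, mul_comm]
            _ ≤ k * k := Nat.mul_le_mul_right _ hSk
        omega
    _ ≤ 2 * k ^ 2 := by nlinarith
end

section
/- Let G = (V,E) be a finite simple graph and let (H,W,I) be a crown of G. Then there exists a minimum-size vertex cover of G that contains all vertices of W and no vertex of I. -/
/-- `S` is a vertex cover of the subgraph of `G` induced by `U`:
`S ⊆ U` and every edge of `G` with both endpoints in `U` has an endpoint in `S`. -/
def IsVertexCoverOn {V : Type*} (G : SimpleGraph V) (U S : Finset V) : Prop :=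
  S ⊆ U ∧ ∀ ⦃u w : V⦄, G.Adj u w → u ∈ U → w ∈ U → u ∈ S ∨ w ∈ S

/-- `M` is a matching between `W` and `I`: a set of edges of `G`, pairwise sharing no
endpoint, each with one endpoint in `W` and the other in `I`. -/
def IsMatchingBetween {V : Type*} (G : SimpleGraph V) (W I : Finset V)
    (M : Finset (V × V)) : Prop :=
  (∀ e ∈ M, G.Adj e.1 e.2 ∧ e.1 ∈ W ∧ e.2 ∈ I) ∧
  (∀ e ∈ M, ∀ e' ∈ M, e ≠ e' →
    e.1 ≠ e'.1 ∧ e.1 ≠ e'.2 ∧ e.2 ≠ e'.1 ∧ e.2 ≠ e'.2)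

/-- `(H, W, I)` is a crown of `G`: a partition of the vertices such that `I` is an
independent set, there is no edge between `I` and `H`, and there is a matching
between `W` and `I` of size `|W|`. -/
def IsCrown {V : Type*} [Fintype V] [DecidableEq V] (G : SimpleGraph V)
    (H W I : Finset V) : Prop :=
  H ∪ W ∪ I = Finset.univ ∧ Disjoint H W ∧ Disjoint H I ∧ Disjoint W I ∧
  (∀ u ∈ I, ∀ w ∈ I, ¬ G.Adj u w) ∧
  (∀ u ∈ I, ∀ h ∈ H, ¬ G.Adj u h) ∧
  ∃ M : Finset (V × V), IsMatchingBetween G W I M ∧ M.card = W.card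

theorem crown_dominance {V : Type*} [Fintype V] [DecidableEq V]
    (G : SimpleGraph V) (H W I : Finset V) (hcrown : IsCrown G H W I) :
    ∃ S : Finset V, IsMinVertexCover G S ∧ W ⊆ S ∧ Disjoint S I := by
  classical
  obtain ⟨hpart, hHW, hHI, hWI, hII, hIH, M, ⟨hMedge, hMdisj⟩, hMcard⟩ := hcrown
  -- choose a vertex cover T of minimum cardinality
  obtain ⟨T, hTmem, hTmin⟩ := Finset.exists_min_image
    (Finset.univ.filter (fun T : Finset V => IsVertexCover G T)) Finset.card
    ⟨Finset.univ, by
      simp only [Finset.mem_filter, Finset.mem_univ, true_and]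
      intro u w _; exact Or.inl (Finset.mem_univ u)⟩
  have hT : IsVertexCover G T := (Finset.mem_filter.mp hTmem).2
  have hTle : ∀ T' : Finset V, IsVertexCover G T' → T.card ≤ T'.card := by
    intro T' hT'
    exact hTmin T' (Finset.mem_filter.mpr ⟨Finset.mem_univ _, hT'⟩)
  -- classification of vertices
  have hmemV : ∀ v : V, v ∈ H ∨ v ∈ W ∨ v ∈ I := by
    intro v
    have : v ∈ H ∪ W ∪ I := hpart ▸ Finset.mem_univ v
    simpa [Finset.mem_union, or_assoc] using this
  refine ⟨(T ∩ H) ∪ W, ⟨?_, ?_⟩, ?_, ?_⟩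
  · -- it is a vertex cover
    intro u w hadj
    rcases hmemV u with hu | hu | hu
    · rcases hmemV w with hw | hw | hw
      · rcases hT hadj with h | h
        · exact Or.inl (Finset.mem_union_left _ (Finset.mem_inter.mpr ⟨h, hu⟩))
        · exact Or.inr (Finset.mem_union_left _ (Finset.mem_inter.mpr ⟨h, hw⟩))
      · exact Or.inr (Finset.mem_union_right _ hw)
      · exact absurd hadj.symm (hIH w hw u hu)
    · exact Or.inl (Finset.mem_union_right _ hu)
    · rcases hmemV w with hw | hw | hw
      · exact absurd hadj (hIH u hu w hw)
      · exact Or.inr (Finset.mem_union_right _ hw)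
      · exact absurd hadj (hII u hu w hw)
  · -- minimality
    intro T' hT'
    -- each matching edge has an endpoint in T; map it injectively into T ∩ (W ∪ I)
    set f : V × V → V := fun e => if e.1 ∈ T then e.1 else e.2 with hf
    have hmap : ∀ e ∈ M, f e ∈ T ∩ (W ∪ I) := by
      intro e he
      obtain ⟨hadj, hW, hI⟩ := hMedge e he
      by_cases h1 : e.1 ∈ T
      · simp only [hf, if_pos h1]
        exact Finset.mem_inter.mpr ⟨h1, Finset.mem_union_left _ hW⟩
      · have h2 : e.2 ∈ T := (hT hadj).resolve_left h1
        simp only [hf, if_neg h1]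
        exact Finset.mem_inter.mpr ⟨h2, Finset.mem_union_right _ hI⟩
    have hinj : Set.InjOn f ↑M := by
      intro e he e' he' hfe
      by_contra hne
      obtain ⟨h11, h12, h21, h22⟩ := hMdisj e (by simpa using he) e' (by simpa using he') hne
      by_cases h1 : e.1 ∈ T <;> by_cases h1' : e'.1 ∈ T <;>
        simp only [hf, if_pos, if_neg, h1, h1', if_true, if_false] at hfe <;>
        simp_all
    have hcard1 : W.card ≤ (T ∩ (W ∪ I)).card := by
      rw [← hMcard]
      exact Finset.card_le_card_of_injOn f hmap hinj
    have hdisj : Disjoint (T ∩ H) (T ∩ (W ∪ I)) := by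
      apply Finset.disjoint_left.mpr
      intro a ha ha'
      have h1 : a ∈ H := (Finset.mem_inter.mp ha).2
      have h2 : a ∈ W ∪ I := (Finset.mem_inter.mp ha').2
      rcases Finset.mem_union.mp h2 with h | h
      · exact Finset.disjoint_left.mp hHW h1 h
      · exact Finset.disjoint_left.mp hHI h1 h
    have hTeq : (T ∩ H) ∪ (T ∩ (W ∪ I)) = T := by
      rw [← Finset.inter_union_distrib_left]
      have : H ∪ (W ∪ I) = Finset.univ := by
        rw [← Finset.union_assoc]; exact hpart
      rw [this, Finset.inter_univ]
    have hTcard : (T ∩ H).card + (T ∩ (W ∪ I)).card = T.card := by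
      rw [← Finset.card_union_of_disjoint hdisj, hTeq]
    calc ((T ∩ H) ∪ W).card ≤ (T ∩ H).card + W.card := Finset.card_union_le _ _
      _ ≤ (T ∩ H).card + (T ∩ (W ∪ I)).card := by omega
      _ = T.card := hTcard
      _ ≤ T'.card := hTle T' hT'
  · exact Finset.subset_union_right
  · -- disjoint from I
    apply Finset.disjoint_left.mpr
    intro a ha haI
    rcases Finset.mem_union.mp ha with h | h
    · exact Finset.disjoint_left.mp hHI (Finset.mem_inter.mp h).2 haI
    · exact Finset.disjoint_left.mp hWI h haI
end

section
/- Let G = (V,E) be a finite simple graph, let (H,W,I) be a crown of G, and let k be an integer with k ≥ |W|. Then G has a vertex cover of size at most k if and only if the subgraph of G induced by H has a vertex cover of size at most k − |W|. -/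
theorem crown_kernelization {V : Type*} [Fintype V] [DecidableEq V]
    (G : SimpleGraph V) (H W I : Finset V) (hcrown : IsCrown G H W I)
    (k : ℕ) (hk : W.card ≤ k) :
    (∃ S : Finset V, IsVertexCover G S ∧ S.card ≤ k) ↔
      (∃ S : Finset V, IsVertexCoverOn G H S ∧ S.card ≤ k - W.card) := by
  obtain ⟨hpart, hHW, hHI, hWI, hII, hIH, M, hM, hMcard⟩ := hcrown
  constructor
  · rintro ⟨S, hS, hScard⟩
    refine ⟨S ∩ H, ⟨Finset.inter_subset_right, ?_⟩, ?_⟩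
    · intro u w hadj hu hw
      rcases hS hadj with h | h
      · exact Or.inl (Finset.mem_inter.mpr ⟨h, hu⟩)
      · exact Or.inr (Finset.mem_inter.mpr ⟨h, hw⟩)
    · have hf : ∀ e ∈ M, (if e.1 ∈ S then e.1 else e.2) ∈ S \ H := by
        intro e he
        obtain ⟨hadj, h1, h2⟩ := hM.1 e he
        by_cases h : e.1 ∈ S
        · simp only [if_pos h, Finset.mem_sdiff]
          exact ⟨h, Finset.disjoint_right.mp hHW h1⟩
        · simp only [if_neg h, Finset.mem_sdiff]
          rcases hS hadj with h' | h'
          · exact absurd h' h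
          · exact ⟨h', Finset.disjoint_right.mp hHI h2⟩
      have hinj : ∀ e ∈ M, ∀ e' ∈ M,
          (if e.1 ∈ S then e.1 else e.2) = (if e'.1 ∈ S then e'.1 else e'.2) → e = e' := by
        intro e he e' he' heq
        by_contra hne
        obtain ⟨a, b, c, d⟩ := hM.2 e he e' he' hne
        split_ifs at heq <;> tauto
      have hcard : W.card ≤ (S \ H).card := by
        rw [← hMcard]
        exact Finset.card_le_card_of_injOn _ (fun e he => hf e he) hinj
      have hsplit : (S ∩ H).card + (S \ H).card = S.card :=
        Finset.card_inter_add_card_sdiff S H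
      omega
  · rintro ⟨S, ⟨hSH, hS⟩, hScard⟩
    refine ⟨S ∪ W, ?_, ?_⟩
    · intro u w hadj
      have hu : u ∈ H ∪ W ∪ I := by rw [hpart]; exact Finset.mem_univ u
      have hw : w ∈ H ∪ W ∪ I := by rw [hpart]; exact Finset.mem_univ w
      simp only [Finset.mem_union] at hu hw ⊢
      rcases hu with (hu | hu) | hu
      · rcases hw with (hw | hw) | hw
        · rcases hS hadj hu hw with h | h <;> tauto
        · tauto
        · exact absurd hadj.symm (hIH w hw u hu)
      · tauto
      · rcases hw with (hw | hw) | hw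
        · exact absurd hadj (hIH u hu w hw)
        · tauto
        · exact absurd hadj (hII u hu w hw)
    · have h1 : (S ∪ W).card ≤ S.card + W.card := Finset.card_union_le S W
      omega
end

section
/- Let G = (V,E) be a finite simple graph and let (H,W,I) be a crown of G such that W is the unique minimum-size vertex cover of the subgraph of G induced by W ∪ I (a rigid crown). Then every minimum-size vertex cover of G contains all vertices of W and contains no vertex of I. -/
/-- `S` is a minimum-size vertex cover of the subgraph of `G` induced by `U`. -/
def IsMinVertexCoverOn {V : Type*} (G : SimpleGraph V) (U S : Finset V) : Prop :=
  IsVertexCoverOn G U S ∧ ∀ T : Finset V, IsVertexCoverOn G U T → S.card ≤ T.card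

theorem rigid_crown_pruning {V : Type*} [Fintype V] [DecidableEq V]
    (G : SimpleGraph V) (H W I : Finset V) (hcrown : IsCrown G H W I)
    (hWmin : IsMinVertexCoverOn G (W ∪ I) W)
    (hunique : ∀ T : Finset V, IsMinVertexCoverOn G (W ∪ I) T → T = W) :
    ∀ S : Finset V, IsMinVertexCover G S → W ⊆ S ∧ Disjoint S I := by

  obtain ⟨hpart, hHW, hHI, hWI, hIind, hIH, -⟩ := hcrown
  intro S hS
  set T := S ∩ (W ∪ I) with hTdef
  have hTcov : IsVertexCoverOn G (W ∪ I) T := by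
    refine ⟨Finset.inter_subset_right, ?_⟩
    intro u w hadj hu hw
    rcases hS.1 hadj with h | h
    · exact Or.inl (Finset.mem_inter.mpr ⟨h, hu⟩)
    · exact Or.inr (Finset.mem_inter.mpr ⟨h, hw⟩)
  have memH : ∀ x, x ∉ W → x ∉ I → x ∈ H := by
    intro x hxW hxI
    have hx : x ∈ H ∪ W ∪ I := hpart ▸ Finset.mem_univ x
    simp only [Finset.mem_union] at hx
    tauto
  have hS'cov : IsVertexCover G ((S \ (W ∪ I)) ∪ W) := by
    intro u w hadj
    by_cases huW : u ∈ W
    · exact Or.inl (Finset.mem_union_right _ huW)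
    by_cases hwW : w ∈ W
    · exact Or.inr (Finset.mem_union_right _ hwW)
    by_cases huI : u ∈ I
    · by_cases hwI : w ∈ I
      · exact absurd hadj (hIind u huI w hwI)
      · exact absurd hadj (hIH u huI w (memH w hwW hwI))
    by_cases hwI : w ∈ I
    · exact absurd hadj.symm (hIH w hwI u (memH u huW huI))
    · rcases hS.1 hadj with h | h
      · refine Or.inl (Finset.mem_union_left _ (Finset.mem_sdiff.mpr ⟨h, ?_⟩))
        simp [huW, huI]
      · refine Or.inr (Finset.mem_union_left _ (Finset.mem_sdiff.mpr ⟨h, ?_⟩))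
        simp [hwW, hwI]
  have hcard1 : S.card ≤ (S \ (W ∪ I)).card + W.card :=
    le_trans (hS.2 _ hS'cov) (Finset.card_union_le _ _)
  have hcard2 : (S \ (W ∪ I)).card + T.card = S.card :=
    Finset.card_sdiff_add_card_inter S (W ∪ I)
  have hTW : T.card ≤ W.card := by omega
  have hTmin : IsMinVertexCoverOn G (W ∪ I) T := by
    refine ⟨hTcov, fun T'' h'' => ?_⟩
    have := hWmin.2 T'' h''
    omega
  have hTeq : T = W := hunique T hTmin
  constructor
  · intro x hx
    have : x ∈ T := hTeq ▸ hx
    exact (Finset.mem_inter.mp this).1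
  · rw [Finset.disjoint_left]
    intro x hxS hxI
    have hxT : x ∈ T := Finset.mem_inter.mpr ⟨hxS, Finset.mem_union_right _ hxI⟩
    rw [hTeq] at hxT
    exact Finset.disjoint_left.mp hWI hxT hxI
end
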